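/- Let u := x_{−i_1}(z_1)⋯x_{−i_N}(z_N), where (i_1,…,i_N) = i_0 and z_1,…,z_N ∈ K^×. Let L be lower unitriangular and V upper unitriangular with (w̄_0·u^T)^{−1} = L·V, set u_1 := (w̄_0·V^{−1}·w̄_0^{−1})^T, let d = diag(d_1,…,d_n) with d_1,…,d_n ∈ K^×, and let u_2 be an upper unitriangular matrix such that b := u_1·d·w̄_0·u_2 is lower triangular. Then for every j = 1,…,n, b_{n+1−j, n+1−j} = d_j·(Π_{1≤m≤N, i_m=j−1} z_m)/(Π_{1≤m≤N, i_m=j} z_m), with the convention that an empty product equals 1. -/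

import Mathlib

open Matrix

noncomputable section

variable {K : Type*} [Field K]

/-- `x_i(z)`: identity except entry `z` in (1-based) position `(i, i+1)`. -/
def xMat (n i : ℕ) (z : K) : Matrix (Fin n) (Fin n) K :=
  Matrix.of fun a b => if (a : ℕ) = (b : ℕ) then 1
    else if (a : ℕ) + 1 = i ∧ (b : ℕ) = i then z else 0

/-- `y_i(z)`: identity except entry `z` in (1-based) position `(i+1, i)`. -/
def yMat (n i : ℕ) (z : K) : Matrix (Fin n) (Fin n) K :=
  Matrix.of fun a b => if (a : ℕ) = (b : ℕ) then 1
    else if (a : ℕ) = i ∧ (b : ℕ) + 1 = i then z else 0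

/-- `x_{-i}(z)`: identity except the 2×2 submatrix in (1-based) rows/columns `i, i+1`
is `((z⁻¹, 0), (1, z))`. -/
def xnegMat (n i : ℕ) (z : K) : Matrix (Fin n) (Fin n) K :=
  Matrix.of fun a b =>
    if (a : ℕ) + 1 = i ∧ (b : ℕ) + 1 = i then z⁻¹
    else if (a : ℕ) = i ∧ (b : ℕ) = i then z
    else if (a : ℕ) = i ∧ (b : ℕ) + 1 = i then 1
    else if (a : ℕ) = (b : ℕ) then 1
    else 0

/-- `s̄_i := x_i(-1) · y_i(1) · x_i(-1)`. -/
def sbar (n i : ℕ) : Matrix (Fin n) (Fin n) K :=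
  xMat n i (-1) * yMat n i 1 * xMat n i (-1)

/-- The reduced expression `i₀ = (1,2,…,n-1, 1,2,…,n-2, …, 1,2, 1)` for `w₀`. -/
def i0List (n : ℕ) : List ℕ :=
  ((List.range (n - 1)).map fun j => List.range' 1 (n - 1 - j)).foldr (· ++ ·) []

/-- The reduced expression `i₀' = (n-1,…,1, n-1,…,2, …, n-1,n-2, n-1)` for `w₀`. -/
def i0'List (n : ℕ) : List ℕ :=
  ((List.range (n - 1)).map fun j => (List.range' (1 + j) (n - 1 - j)).reverse).foldr (· ++ ·) []

/-- The matrix `w̄₀ = s̄_{i_1} ⋯ s̄_{i_N}` (computed along `i₀`; it is independent of the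
choice of reduced expression). -/
def w0Mat (n : ℕ) : Matrix (Fin n) (Fin n) K :=
  ((i0List n).map fun i => sbar n i).prod

/-- `x_{-i_1}(z_1) ⋯ x_{-i_N}(z_N)` along the word `l` (with 1-based coordinates `z`). -/
def xnegProd (n : ℕ) (l : List ℕ) (z : ℕ → K) : Matrix (Fin n) (Fin n) K :=
  ((List.range l.length).map fun r => xnegMat n (l.getD r 0) (z (r + 1))).prod

/-- `x_{i_1}(p_1) ⋯ x_{i_N}(p_N)` along the word `l`. -/
def xProd (n : ℕ) (l : List ℕ) (p : ℕ → K) : Matrix (Fin n) (Fin n) K :=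
  ((List.range l.length).map fun r => xMat n (l.getD r 0) (p (r + 1))).prod

/-- `y_{i_1}(q_1) ⋯ y_{i_N}(q_N)` along the word `l`. -/
def yProd (n : ℕ) (l : List ℕ) (q : ℕ → K) : Matrix (Fin n) (Fin n) K :=
  ((List.range l.length).map fun r => yMat n (l.getD r 0) (q (r + 1))).prod

/-- The adjacent transposition `σ_i` (swapping `i` and `i+1`), as a function on `ℕ`. -/
def sigmaFun (i : ℕ) : ℕ → ℕ := fun k => if k = i then i + 1 else if k = i + 1 then i else k

/-- `σ_{i_1} ∘ σ_{i_2} ∘ ⋯ ∘ σ_{i_N}` (rightmost factor applied first). -/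
def wordPerm (l : List ℕ) : ℕ → ℕ := l.foldr (fun i f => sigmaFun i ∘ f) id

/-- A reduced expression for the longest element `w₀` of `Sₙ`. -/
def IsReducedWord (n : ℕ) (l : List ℕ) : Prop :=
  l.length = n * (n - 1) / 2 ∧ (∀ i ∈ l, 1 ≤ i ∧ i ≤ n - 1) ∧
    ∀ k, 1 ≤ k → k ≤ n → wordPerm l k = n + 1 - k

/-- Lower unitriangular. -/
def IsLowerUni {n : ℕ} (M : Matrix (Fin n) (Fin n) K) : Prop :=
  (∀ i, M i i = 1) ∧ ∀ i j : Fin n, i < j → M i j = 0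

/-- Upper unitriangular. -/
def IsUpperUni {n : ℕ} (M : Matrix (Fin n) (Fin n) K) : Prop :=
  (∀ i, M i i = 1) ∧ ∀ i j : Fin n, j < i → M i j = 0

/-- `s_k := Σ_{j=1}^{k-1} (n - j)`. -/
def sIdx (n k : ℕ) : ℕ := ∑ j ∈ Finset.range (k - 1), (n - (j + 1))

/-! The factor `u` is lower triangular: every `x_{-i}(z)` is, with diagonal entries `z⁻¹` and `z`
in positions `i` and `i+1`, so the `j`-th diagonal entry of `u` is
`(∏_{i_m = j-1} z_m) / (∏_{i_m = j} z_m)`, and `u` is invertible.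
Each `s̄_i` acts on rows as a signed transposition and `i₀` is a reduced word for the reversal,
so `w̄₀` is a signed antidiagonal matrix; conjugating by it reverses the order of the indices and
exchanges upper and lower triangular matrices. From `(w̄₀ uᵀ)⁻¹ = L V` we get
`V⁻¹ = w̄₀ uᵀ L`, hence `b = (w̄₀ Lᵀ w̄₀ᵀ) · (w̄₀ u w̄₀ᵀ) (w̄₀ᵀ d w̄₀) u₂ = L' R`
with `L'` lower unitriangular and `R` upper triangular, `R_{n+1-j,n+1-j} = u_{jj} d_j`.
As `b` is lower triangular, so is `R = L'⁻¹ b`, and the diagonal of `b = L' R` is that of `R`. -/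

namespace Matrix

section Triangular

variable {m α R : Type*} [Fintype m] [LinearOrder α] {b : m → α}

theorem BlockTriangular.mul_apply_self [NonUnitalNonAssocSemiring R] (hb : Function.Injective b)
    {M N : Matrix m m R} (hM : M.BlockTriangular b) (hN : N.BlockTriangular b) (i : m) :
    (M * N) i i = M i i * N i i := by
  rw [mul_apply, Finset.sum_eq_single i]
  · intro k _ hk
    rcases lt_or_gt_of_ne (hb.ne hk) with h | h
    · rw [hM h, zero_mul]
    · rw [hN h, mul_zero]
  · exact fun h => absurd (Finset.mem_univ i) h

variable [DecidableEq m] [Semiring R]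

theorem BlockTriangular.list_prod {l : List (Matrix m m R)}
    (hl : ∀ M ∈ l, M.BlockTriangular b) : l.prod.BlockTriangular b :=
  (blockTriangularSubsemiring R b).list_prod_mem hl

theorem BlockTriangular.list_prod_apply_self (hb : Function.Injective b)
    {l : List (Matrix m m R)} (hl : ∀ M ∈ l, M.BlockTriangular b) (i : m) :
    l.prod i i = (l.map fun M => M i i).prod := by
  induction l with
  | nil => simp
  | cons M l ih =>
    have hl' : ∀ N ∈ l, N.BlockTriangular b := fun N hN => hl N (List.mem_cons_of_mem _ hN)
    rw [List.prod_cons, List.map_cons, List.prod_cons,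
      (hl M List.mem_cons_self).mul_apply_self hb (list_prod hl'), ih hl']

end Triangular

theorem IsLowerTriangular.unitriangular_mul_apply_self {m R : Type*} [Fintype m] [DecidableEq m]
    [LinearOrder m] [CommRing R] {L M : Matrix m m R} (hL : L.IsLowerTriangular)
    (hL1 : ∀ i, L i i = 1) (hLM : (L * M).IsLowerTriangular) (i : m) :
    (L * M) i i = M i i := by
  have hdet : IsUnit L.det := by simp [det_of_isLowerTriangular L hL, hL1]
  have : Invertible L := invertibleOfIsUnitDet L hdet
  have hLinv : L⁻¹.IsLowerTriangular := blockTriangular_inv_of_blockTriangular hL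
  have hinv1 : L⁻¹ i i = 1 := by
    simpa [hLinv.mul_apply_self OrderDual.toDual.injective hL, hL1] using
      congrFun₂ (nonsing_inv_mul L hdet) i i
  calc (L * M) i i = (L⁻¹ * (L * M)) i i := by
        rw [hLinv.mul_apply_self OrderDual.toDual.injective hLM, hinv1, one_mul]
    _ = M i i := by rw [← Matrix.mul_assoc, nonsing_inv_mul _ hdet, Matrix.one_mul]

theorem transvection_swap_mul_apply {ι κ R : Type*} [Fintype ι] [DecidableEq ι] [CommRing R]
    {p q : ι} (hpq : p ≠ q) (M : Matrix ι κ R) (a : ι) (c : κ) :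
    (transvection p q (-1 : R) * (transvection q p (1 : R) *
        (transvection p q (-1 : R) * M))) a c =
      if a = p then -M q c else if a = q then M p c else M a c := by
  by_cases hp : a = p
  · subst hp; simp [hpq, Ne.symm hpq]
  · by_cases hq : a = q
    · subst hq; simp [hp]
    · simp [hp, hq]

end Matrix

theorem List.prod_map_range {M : Type*} [CommMonoid M] (N : ℕ) (f : ℕ → M) :
    ((List.range N).map f).prod = ∏ r ∈ Finset.range N, f r := by
  rw [Finset.prod_eq_multiset_prod]; rfl

theorem Finset.prod_filter_Icc_one_eq_prod_range {M : Type*} [CommMonoid M] (N : ℕ)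
    (p : ℕ → Prop) [DecidablePred p] (f : ℕ → M) :
    ∏ m ∈ (Icc 1 N).filter p, f m = ∏ r ∈ range N, if p (r + 1) then f (r + 1) else 1 := by
  rw [prod_filter, ← Finset.Ico_add_one_right_eq_Icc, prod_Ico_eq_prod_range, Nat.add_sub_cancel]
  simp only [add_comm]

section Words

theorem i0List_succ (m : ℕ) : i0List (m + 1) = List.range' 1 m ++ i0List m := by
  cases m with
  | zero => rfl
  | succ k =>
    unfold i0List
    rw [show k + 1 + 1 - 1 = k + 1 from rfl, show k + 1 - 1 = k from rfl,
      List.range_succ_eq_map, List.map_cons, List.foldr_cons, List.map_map]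
    simp [Function.comp_def, Nat.succ_sub_succ]

theorem i0List_length (n : ℕ) : (i0List n).length = n * (n - 1) / 2 := by
  induction n with
  | zero => rfl
  | succ m ih =>
    rw [i0List_succ, List.length_append, List.length_range', ih, Nat.triangle_succ, add_comm]

theorem mem_i0List {n i : ℕ} (hi : i ∈ i0List n) : 1 ≤ i ∧ i < n := by
  induction n with
  | zero => simp [i0List] at hi
  | succ m ih =>
    rw [i0List_succ, List.mem_append, List.mem_range'_1] at hi
    rcases hi with h | h
    · omega
    · have := ih h; omega

theorem wordPerm_cons (i : ℕ) (l : List ℕ) (k : ℕ) :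
    wordPerm (i :: l) k = sigmaFun i (wordPerm l k) := rfl

theorem wordPerm_append (l₁ l₂ : List ℕ) : wordPerm (l₁ ++ l₂) = wordPerm l₁ ∘ wordPerm l₂ := by
  induction l₁ with
  | nil => rfl
  | cons i l ih => simp only [List.cons_append, wordPerm, List.foldr_cons] at ih ⊢; rw [ih]; rfl

theorem wordPerm_range' (m k : ℕ) : wordPerm (List.range' 1 m) k =
    if 1 ≤ k ∧ k ≤ m then k + 1 else if k = m + 1 then 1 else k := by
  induction m generalizing k with
  | zero => simp only [List.range'_zero, wordPerm, List.foldr_nil, id]; split_ifs <;> omega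
  | succ p ih =>
    rw [List.range'_concat, wordPerm_append, Function.comp_apply]
    simp only [wordPerm, List.foldr_cons, List.foldr_nil, Function.comp_id, sigmaFun] at ih ⊢
    rw [ih]
    split_ifs <;> omega

theorem wordPerm_i0List (n k : ℕ) :
    wordPerm (i0List n) k = if 1 ≤ k ∧ k ≤ n then n + 1 - k else k := by
  induction n generalizing k with
  | zero => show k = _; split_ifs <;> omega
  | succ m ih =>
    rw [i0List_succ, wordPerm_append, Function.comp_apply, ih, wordPerm_range']
    split_ifs <;> omega

end Words

section ElementaryMatrices

variable {n : ℕ}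

theorem xMat_eq_transvection {i : ℕ} (hi1 : 1 ≤ i) (hi : i < n) (z : K) :
    xMat n i z = transvection (⟨i - 1, by omega⟩ : Fin n) ⟨i, hi⟩ z := by
  ext a c
  simp only [xMat, transvection, of_apply, Matrix.add_apply, one_apply, single_apply,
    Fin.ext_iff]
  split_ifs <;> first | omega | simp

theorem yMat_eq_transvection {i : ℕ} (hi1 : 1 ≤ i) (hi : i < n) (z : K) :
    yMat n i z = transvection (⟨i, hi⟩ : Fin n) ⟨i - 1, by omega⟩ z := by
  ext a c
  simp only [yMat, transvection, of_apply, Matrix.add_apply, one_apply, single_apply,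
    Fin.ext_iff]
  split_ifs <;> first | omega | simp

theorem sbar_mul_apply {i : ℕ} (hi : 1 ≤ i) (hin : i < n) (M : Matrix (Fin n) (Fin n) K)
    (a c : Fin n) :
    ((sbar n i : Matrix (Fin n) (Fin n) K) * M) a c =
      if (a : ℕ) + 1 = i then -M ⟨i, hin⟩ c else if (a : ℕ) = i then M ⟨i - 1, by omega⟩ c
      else M a c := by
  have hpq : (⟨i - 1, by omega⟩ : Fin n) ≠ ⟨i, hin⟩ := by simp [Fin.ext_iff]; omega
  rw [sbar.eq_1, xMat_eq_transvection hi hin, yMat_eq_transvection hi hin, Matrix.mul_assoc,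
    Matrix.mul_assoc, transvection_swap_mul_apply hpq]
  simp only [Fin.ext_iff]
  split_ifs <;> first | omega | rfl

-- `wordPerm` acts on 1-based indices, rows and columns of `Fin n` are 0-based.
theorem list_prod_sbar_apply (l : List ℕ) (hl : ∀ i ∈ l, 1 ≤ i ∧ i < n) :
    ∃ ε : Fin n → K, (∀ c, ε c * ε c = 1) ∧ ∀ a c : Fin n,
      (l.map fun i => (sbar n i : Matrix (Fin n) (Fin n) K)).prod a c =
        if (a : ℕ) + 1 = wordPerm l (c + 1) then ε c else 0 := by
  induction l with
  | nil =>
    refine ⟨1, fun _ => mul_one 1, fun a c => ?_⟩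
    simp only [List.map_nil, List.prod_nil, one_apply, wordPerm, List.foldr_nil, id,
      Fin.ext_iff, Nat.add_right_cancel_iff, Pi.one_apply]
  | cons i l ih =>
    obtain ⟨hi, hin⟩ := hl i List.mem_cons_self
    obtain ⟨ε, hε, hP⟩ := ih fun j hj => hl j (List.mem_cons_of_mem _ hj)
    refine ⟨fun c => if wordPerm l (c + 1) = i + 1 then -ε c else ε c, fun c => ?_,
      fun a c => ?_⟩
    · dsimp only; split_ifs <;> simp [hε]
    · rw [List.map_cons, List.prod_cons, sbar_mul_apply hi hin]
      simp only [hP, wordPerm_cons, sigmaFun]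
      split_ifs <;> first | rfl | omega | simp

theorem xnegMat_isLowerTriangular (i : ℕ) (z : K) : (xnegMat n i z).IsLowerTriangular := by
  intro a c h
  have h' : (a : ℕ) < c := h
  simp only [xnegMat, of_apply]
  split_ifs <;> first | omega | rfl

theorem xnegMat_apply_self (i : ℕ) (z : K) (j : Fin n) :
    xnegMat n i z j j = (if i = j then z else 1) / (if i = j + 1 then z else 1) := by
  simp only [xnegMat, of_apply]
  split_ifs <;> first | omega | simp

end ElementaryMatrices

def IsSignedAntidiagonal {n : ℕ} (S : Matrix (Fin n) (Fin n) K) : Prop :=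
  ∃ ε : Fin n → K, (∀ a, ε a * ε a = 1) ∧ ∀ a c, S a c = if c = a.rev then ε a else 0

namespace IsSignedAntidiagonal

variable {n : ℕ} {S : Matrix (Fin n) (Fin n) K}

theorem transpose (hS : IsSignedAntidiagonal S) : IsSignedAntidiagonal Sᵀ := by
  obtain ⟨ε, hε, hSε⟩ := hS
  refine ⟨fun a => ε a.rev, fun a => hε a.rev, fun a c => ?_⟩
  rw [transpose_apply, hSε]
  by_cases h : c = a.rev
  · simp [h]
  · have h' : a ≠ c.rev := fun h' => h (by rw [h', Fin.rev_rev])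
    simp [h, h']

theorem mul_transpose_self (hS : IsSignedAntidiagonal S) : S * Sᵀ = 1 := by
  obtain ⟨ε, hε, hSε⟩ := hS
  ext a c
  by_cases h : a = c
  · subst h; simp [mul_apply, hSε, hε]
  · simp [mul_apply, hSε, h, Ne.symm h]

theorem transpose_mul_self (hS : IsSignedAntidiagonal S) : Sᵀ * S = 1 :=
  mul_eq_one_comm.mp hS.mul_transpose_self

theorem conj_apply_self (hS : IsSignedAntidiagonal S) (X : Matrix (Fin n) (Fin n) K)
    (a : Fin n) : (S * X * Sᵀ) a a = X a.rev a.rev := by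
  obtain ⟨ε, hε, hSε⟩ := hS
  simp only [mul_apply, transpose_apply, hSε, ite_mul, mul_ite, zero_mul, mul_zero,
    Finset.sum_ite_eq', Finset.mem_univ, if_true]
  linear_combination X a.rev a.rev * hε a

theorem conj_apply_eq_zero (hS : IsSignedAntidiagonal S) {X : Matrix (Fin n) (Fin n) K}
    {a c : Fin n} (hX : X a.rev c.rev = 0) : (S * X * Sᵀ) a c = 0 := by
  obtain ⟨ε, -, hSε⟩ := hS
  simp [mul_apply, hSε, hX]

theorem isLowerTriangular_conj (hS : IsSignedAntidiagonal S) {X : Matrix (Fin n) (Fin n) K}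
    (hX : X.IsUpperTriangular) : (S * X * Sᵀ).IsLowerTriangular :=
  fun _ _ h => hS.conj_apply_eq_zero (hX (Fin.rev_lt_rev.mpr h))

theorem isUpperTriangular_conj (hS : IsSignedAntidiagonal S) {X : Matrix (Fin n) (Fin n) K}
    (hX : X.IsLowerTriangular) : (S * X * Sᵀ).IsUpperTriangular :=
  fun _ _ h => hS.conj_apply_eq_zero (hX (Fin.rev_lt_rev.mpr h))

theorem apply_rev_rev_of_isLowerTriangular (hS : IsSignedAntidiagonal S)
    {u L V u₂ : Matrix (Fin n) (Fin n) K} {d : Fin n → K} (hu : u.IsLowerTriangular)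
    (hu_det : IsUnit u.det) (hL : IsLowerUni L) (hLV : (S * uᵀ)⁻¹ = L * V)
    (hu₂ : IsUpperUni u₂)
    (hb : ((S * V⁻¹ * S⁻¹)ᵀ * diagonal d * S * u₂).IsLowerTriangular) (j : Fin n) :
    ((S * V⁻¹ * S⁻¹)ᵀ * diagonal d * S * u₂) j.rev j.rev = u j j * d j := by
  have hV_inv : V⁻¹ = S * uᵀ * L := by
    have hSu : IsUnit (S * uᵀ).det := by
      rw [det_mul, det_transpose]
      exact (isUnit_det_of_right_inverse hS.mul_transpose_self).mul hu_det
    refine inv_eq_left_inv ?_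
    rw [Matrix.mul_assoc, ← hLV, mul_nonsing_inv _ hSu]
  have hSS (X : Matrix (Fin n) (Fin n) K) : Sᵀ * (S * X) = X := by
    rw [← Matrix.mul_assoc, hS.transpose_mul_self, Matrix.one_mul]
  have hb_eq : (S * V⁻¹ * S⁻¹)ᵀ * diagonal d * S * u₂ =
      (S * Lᵀ * Sᵀ) * ((S * u * Sᵀ) * (Sᵀ * diagonal d * Sᵀᵀ) * u₂) := by
    rw [hV_inv, inv_eq_right_inv hS.mul_transpose_self]
    simp only [transpose_mul, transpose_transpose, Matrix.mul_assoc, hSS]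
  have hL_conj : (S * Lᵀ * Sᵀ).IsLowerTriangular :=
    hS.isLowerTriangular_conj fun a c h => hL.2 c a h
  have hu_conj : (S * u * Sᵀ).IsUpperTriangular := hS.isUpperTriangular_conj hu
  have hd_conj : (Sᵀ * diagonal d * Sᵀᵀ).IsUpperTriangular :=
    hS.transpose.isUpperTriangular_conj (blockTriangular_diagonal d)
  have hu₂' : u₂.IsUpperTriangular := fun a c h => hu₂.2 a c h
  rw [hb_eq] at hb ⊢
  rw [hL_conj.unitriangular_mul_apply_self (fun a => by
      rw [hS.conj_apply_self, transpose_apply, hL.1]) hb,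
    (hu_conj.mul hd_conj).mul_apply_self Function.injective_id hu₂',
    hu_conj.mul_apply_self Function.injective_id hd_conj, hS.conj_apply_self,
    hS.transpose.conj_apply_self, diagonal_apply_eq, hu₂.1, mul_one, Fin.rev_rev]

end IsSignedAntidiagonal

theorem isSignedAntidiagonal_w0Mat (n : ℕ) : IsSignedAntidiagonal (w0Mat (K := K) n) := by
  obtain ⟨ε, hε, hW⟩ := list_prod_sbar_apply (K := K) (i0List n) fun i => mem_i0List
  refine ⟨fun a => ε a.rev, fun a => hε a.rev, fun a c => ?_⟩
  have hc : 1 ≤ (c : ℕ) + 1 ∧ (c : ℕ) + 1 ≤ n := by omega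
  rw [w0Mat, hW, wordPerm_i0List, if_pos hc]
  by_cases h : c = a.rev
  · subst h
    rw [if_pos (by rw [Fin.val_rev]; omega), if_pos rfl]
  · rw [if_neg h, if_neg fun h' => h (Fin.ext (by rw [Fin.val_rev]; omega))]

/-- `∏_{i_m = c} z_m`, over the 1-based positions `m` of the word `l = (i_1, …, i_N)`. -/
def wordLetterProd (l : List ℕ) (z : ℕ → K) (c : ℕ) : K :=
  ∏ m ∈ (Finset.Icc 1 l.length).filter (fun m => l.getD (m - 1) 0 = c), z m

section XnegProd

variable {n : ℕ}

theorem xnegProd_isLowerTriangular (l : List ℕ) (z : ℕ → K) :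
    (xnegProd n l z).IsLowerTriangular :=
  BlockTriangular.list_prod (by simp [xnegMat_isLowerTriangular])

theorem xnegProd_apply_self (l : List ℕ) (z : ℕ → K) (j : Fin n) :
    xnegProd n l z j j = wordLetterProd l z j / wordLetterProd l z (j + 1) := by
  rw [xnegProd, BlockTriangular.list_prod_apply_self OrderDual.toDual.injective
    (by simp [xnegMat_isLowerTriangular]), List.map_map, List.prod_map_range]
  simp only [Function.comp_apply, xnegMat_apply_self, Finset.prod_div_distrib, wordLetterProd,
    Finset.prod_filter_Icc_one_eq_prod_range, Nat.add_sub_cancel]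

theorem isUnit_det_xnegProd {l : List ℕ} {z : ℕ → K}
    (hz : ∀ m, 1 ≤ m → m ≤ l.length → z m ≠ 0) : IsUnit (xnegProd n l z).det := by
  have hprod (c : ℕ) : wordLetterProd l z c ≠ 0 :=
    Finset.prod_ne_zero_iff.mpr fun m hm => by
      obtain ⟨⟨h1, h2⟩, -⟩ := Finset.mem_filter.mp hm |>.imp_left Finset.mem_Icc.mp
      exact hz m h1 h2
  simp only [det_of_isLowerTriangular _ (xnegProd_isLowerTriangular l z), xnegProd_apply_self,
    isUnit_iff_ne_zero]
  exact Finset.prod_ne_zero_iff.mpr fun a _ => div_ne_zero (hprod _) (hprod _)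

end XnegProd

theorem stmt2_general (n : ℕ) (z : ℕ → K)
    (hz : ∀ k, 1 ≤ k → k ≤ n * (n - 1) / 2 → z k ≠ 0)
    (u : Matrix (Fin n) (Fin n) K) (hu : u = xnegProd n (i0List n) z)
    (L V : Matrix (Fin n) (Fin n) K) (hL : IsLowerUni L)
    (hLV : (w0Mat n * uᵀ)⁻¹ = L * V)
    (u1 : Matrix (Fin n) (Fin n) K)
    (hu1 : u1 = (w0Mat n * V⁻¹ * (w0Mat (K := K) n)⁻¹)ᵀ)
    (d : Fin n → K)
    (u2 : Matrix (Fin n) (Fin n) K) (hu2 : IsUpperUni u2)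
    (b : Matrix (Fin n) (Fin n) K) (hb : b = u1 * Matrix.diagonal d * w0Mat n * u2)
    (hbl : ∀ i j : Fin n, i < j → b i j = 0) :
    ∀ j : Fin n, b j.rev j.rev = d j *
      (∏ m ∈ (Finset.Icc 1 (n * (n - 1) / 2)).filter
          (fun m => (i0List n).getD (m - 1) 0 = (j : ℕ)), z m) /
      (∏ m ∈ (Finset.Icc 1 (n * (n - 1) / 2)).filter
          (fun m => (i0List n).getD (m - 1) 0 = (j : ℕ) + 1), z m) := by
  intro j
  subst hu hu1 hb
  have hlen := i0List_length n
  rw [(isSignedAntidiagonal_w0Mat n).apply_rev_rev_of_isLowerTriangular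
      (xnegProd_isLowerTriangular _ _) (isUnit_det_xnegProd (by rwa [hlen])) hL hLV hu2
      (fun a c h => hbl a c h) j,
    xnegProd_apply_self, wordLetterProd, wordLetterProd, hlen]
  ring

theorem stmt2 (n : ℕ) (hn : 2 ≤ n) (z : ℕ → K)
    (hz : ∀ k, 1 ≤ k → k ≤ n * (n - 1) / 2 → z k ≠ 0)
    (u : Matrix (Fin n) (Fin n) K) (hu : u = xnegProd n (i0List n) z)
    (L V : Matrix (Fin n) (Fin n) K) (hL : IsLowerUni L) (hV : IsUpperUni V)
    (hLV : (w0Mat n * uᵀ)⁻¹ = L * V)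
    (u1 : Matrix (Fin n) (Fin n) K)
    (hu1 : u1 = (w0Mat n * V⁻¹ * (w0Mat (K := K) n)⁻¹)ᵀ)
    (d : Fin n → K) (hd : ∀ j, d j ≠ 0)
    (u2 : Matrix (Fin n) (Fin n) K) (hu2 : IsUpperUni u2)
    (b : Matrix (Fin n) (Fin n) K) (hb : b = u1 * Matrix.diagonal d * w0Mat n * u2)
    (hbl : ∀ i j : Fin n, i < j → b i j = 0) :
    ∀ j : Fin n, b j.rev j.rev = d j *
      (∏ m ∈ (Finset.Icc 1 (n * (n - 1) / 2)).filter
          (fun m => (i0List n).getD (m - 1) 0 = (j : ℕ)), z m) /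
      (∏ m ∈ (Finset.Icc 1 (n * (n - 1) / 2)).filter
          (fun m => (i0List n).getD (m - 1) 0 = (j : ℕ) + 1), z m) :=
  stmt2_general n z hz u hu L V hL hLV u1 hu1 d u2 hu2 b hb hbl
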